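/- arXiv:2508.00247 — 3 statements merged into one kernel-verified Lean document; each statement's English description precedes it below -/
import Mathlib

section
/- Fix N ∈ ℕ and phases α_0, …, α_N with 0 < α_k < π/2 for all k. There exist frequencies ω_0, …, ω_N ∈ [0, 2π] such that the (N+1)×(N+1) matrix M with entries M_{l,k} = ω_k^l · sin(α_k + lπ/2) (rows indexed by l = 0,…,N, columns by k = 0,…,N) has nonzero determinant. -/
/-!
Replace each `ω_k` by a variable `X_k`. In the expansion of the determinant the permutation `σ`
contributes the monomial `∏ X_k ^ σ(k)`, and these are distinct for distinct `σ`, so the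
coefficient of `∏ X_k ^ k` is the diagonal product `∏ sin (α_k + kπ/2) ≠ 0`. A nonzero
multivariate polynomial over `ℝ` cannot vanish on the whole box `[0, 2π]^(N+1)`.
-/

open Real MvPolynomial Function

theorem Real.sin_add_nat_mul_pi_div_two_ne_zero {a : ℝ} (ha : a ∈ Set.Ioo 0 (π / 2)) (l : ℕ) :
    sin (a + l * π / 2) ≠ 0 := by
  rw [Ne, Real.sin_eq_zero_iff]
  rintro ⟨m, hm⟩
  have ha' : a = (2 * m - l : ℝ) * (π / 2) := by linarith
  have h0 : (0 : ℝ) < 2 * m - l := pos_of_mul_pos_left (ha' ▸ ha.1) (by positivity)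
  have h1 : (2 * m - l : ℝ) < 1 :=
    lt_of_mul_lt_mul_right (by linarith [ha.2]) (by positivity : (0 : ℝ) ≤ π / 2)
  have : (0 : ℤ) < 2 * m - l ∧ 2 * m - l < 1 := ⟨by exact_mod_cast h0, by exact_mod_cast h1⟩
  omega

section GeneralizedVandermonde

variable {R ι : Type*} [CommRing R] [Fintype ι] [DecidableEq ι]

theorem MvPolynomial.coeff_det_C_mul_X_pow {e : ι → ℕ} (he : Injective e) (c : ι → ι → R) :
    coeff (Finsupp.indicator Finset.univ fun k _ ↦ e k)
      (Matrix.of fun l k ↦ C (c l k) * X k ^ e l : Matrix ι ι (MvPolynomial ι R)).det =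
      ∏ k, c k k := by
  simp only [Matrix.det_apply, coeff_sum, coeff_smul, Matrix.of_apply, Finset.prod_mul_distrib,
    ← map_prod, coeff_C_mul, coeff_prod_X_pow]
  rw [Finset.sum_eq_single 1]
  · simp
  · intro σ _ hσ
    rw [if_neg, mul_zero, smul_zero]
    intro h
    apply hσ
    ext k
    have := DFunLike.congr_fun h k
    simp only [Finsupp.indicator_apply, Finset.mem_univ, dite_true] at this
    exact he this.symm
  · simp

theorem MvPolynomial.eval_det_C_mul_X_pow (e : ι → ℕ) (c : ι → ι → R) (ω : ι → R) :
    eval ω (Matrix.of fun l k ↦ C (c l k) * X k ^ e l : Matrix ι ι (MvPolynomial ι R)).det =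
      (Matrix.of fun l k ↦ ω k ^ e l * c l k).det := by
  rw [RingHom.map_det]
  congr 1
  ext l k
  simp [mul_comm]

theorem exists_mem_pi_det_pow_mul_ne_zero [IsDomain R] {e : ι → ℕ} (he : Injective e)
    {c : ι → ι → R} (hc : ∀ k, c k k ≠ 0) {s : ι → Set R} (hs : ∀ k, (s k).Infinite) :
    ∃ ω ∈ Set.univ.pi s, (Matrix.of fun l k ↦ ω k ^ e l * c l k).det ≠ 0 := by
  have hP : (Matrix.of fun l k ↦ C (c l k) * X k ^ e l : Matrix ι ι (MvPolynomial ι R)).det ≠ 0 :=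
    ne_zero_iff.mpr ⟨_, (coeff_det_C_mul_X_pow he c).trans_ne <|
      Finset.prod_ne_zero_iff.mpr fun k _ ↦ hc k⟩
  by_contra! h
  exact hP <| funext_set s hs fun ω hω ↦ by rw [eval_det_C_mul_X_pow, h ω hω, map_zero]

end GeneralizedVandermonde

/-- Frequencies in `[0, 2π]` can be chosen so that the generalized Vandermonde-type
matrix `M_{l,k} = ω_k^l sin (α_k + l π / 2)` is invertible. -/
theorem exists_freq_det_ne_zero (N : ℕ) (α : ℕ → ℝ)
    (hα : ∀ k ≤ N, α k ∈ Set.Ioo (0:ℝ) (π / 2)) :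
    ∃ ω : ℕ → ℝ, (∀ k ≤ N, ω k ∈ Set.Icc (0:ℝ) (2 * π)) ∧
      (Matrix.of fun l k : Fin (N + 1) =>
        (ω k) ^ (l : ℕ) * Real.sin (α k + (l : ℕ) * π / 2)).det ≠ 0 := by
  obtain ⟨ω, hω, hdet⟩ := exists_mem_pi_det_pow_mul_ne_zero (s := fun _ ↦ Set.Icc 0 (2 * π))
    Fin.val_injective (c := fun (l k : Fin (N + 1)) ↦ sin (α k + (l : ℕ) * π / 2))
    (fun k ↦ sin_add_nat_mul_pi_div_two_ne_zero (hα k k.is_le) k)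
    (fun _ ↦ Set.Icc_infinite (by positivity))
  refine ⟨fun n ↦ ω (Fin.ofNat (N + 1) n), fun _ _ ↦ hω _ trivial, ?_⟩
  simpa only [Fin.ofNat_val_eq_self] using hdet
end

section
/- Let f : [0,1] → ℝ be continuous and let 0 < α ≤ π/2. For any ε > 0, there exists N₀ ∈ ℕ such that for all N > N₀, there exist frequencies ω_k ∈ [0, 2π] and amplitudes A_k ∈ ℝ for 0 ≤ k ≤ N satisfying sup_{0 ≤ x ≤ 1} |f(x) − Σ_{k=0}^{N} A_k sin(ω_k x + kα/(N+1))| < ε. -/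
open Real Finset

private lemma aux_abs_cos_sub_cos (a b : ℝ) : |Real.cos a - Real.cos b| ≤ |a - b| := by
  rw [Real.cos_sub_cos]
  have h1 : |Real.sin ((a + b) / 2)| ≤ 1 := Real.abs_sin_le_one _
  have h2 : |Real.sin ((a - b) / 2)| ≤ |a - b| / 2 := by
    have h := Real.abs_sin_le_abs (x := (a - b) / 2)
    rwa [abs_div, abs_two] at h
  rw [abs_mul, abs_mul, abs_neg, abs_two]
  nlinarith [abs_nonneg (Real.sin ((a - b) / 2)), abs_nonneg (Real.sin ((a + b) / 2))]

private lemma aux_abs_sin_sub_sin (a b : ℝ) : |Real.sin a - Real.sin b| ≤ |a - b| := by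
  rw [Real.sin_sub_sin]
  have h1 : |Real.cos ((a + b) / 2)| ≤ 1 := Real.abs_cos_le_one _
  have h2 : |Real.sin ((a - b) / 2)| ≤ |a - b| / 2 := by
    have h := Real.abs_sin_le_abs (x := (a - b) / 2)
    rwa [abs_div, abs_two] at h
  rw [abs_mul, abs_mul, abs_two]
  nlinarith [abs_nonneg (Real.sin ((a - b) / 2)), abs_nonneg (Real.cos ((a + b) / 2))]

private lemma aux_uIoc_abs {s u : ℝ} (hu : u ∈ Set.uIoc (0:ℝ) s) : |u| ≤ |s| := by
  rcases hu with ⟨h1, h2⟩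
  refine abs_le.mpr ⟨?_, h2.trans (max_le (abs_nonneg s) (le_abs_self s))⟩
  exact le_of_lt (lt_of_le_of_lt (le_min (neg_nonpos.mpr (abs_nonneg s)) (neg_abs_le s)) h1)

private lemma aux_sin_taylor (θ s : ℝ) :
    |Real.sin (θ + s) - Real.sin θ - s * Real.cos θ| ≤ s ^ 2 := by
  have hcont : Continuous fun u : ℝ => Real.cos (θ + u) :=
    Real.continuous_cos.comp (continuous_const.add continuous_id)
  have h2 : (∫ u in (0:ℝ)..s, (Real.cos (θ + u) - Real.cos θ))
      = Real.sin (θ + s) - Real.sin θ - s * Real.cos θ := by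
    rw [intervalIntegral.integral_sub (hcont.intervalIntegrable _ _)
      (intervalIntegrable_const), intervalIntegral.integral_const]
    have h3 : (∫ u in (0:ℝ)..s, Real.cos (θ + u)) = ∫ u in θ..(θ + s), Real.cos u := by
      simpa using intervalIntegral.integral_comp_add_left (a := (0:ℝ)) (b := s) Real.cos θ
    rw [h3, integral_cos]
    simp
  have hb : ∀ u ∈ Set.uIoc (0:ℝ) s, ‖Real.cos (θ + u) - Real.cos θ‖ ≤ |s| := by
    intro u hu
    calc ‖Real.cos (θ + u) - Real.cos θ‖ ≤ |(θ + u) - θ| := aux_abs_cos_sub_cos _ _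
      _ = |u| := by ring_nf
      _ ≤ |s| := aux_uIoc_abs hu
  calc |Real.sin (θ + s) - Real.sin θ - s * Real.cos θ|
      = ‖∫ u in (0:ℝ)..s, (Real.cos (θ + u) - Real.cos θ)‖ := by rw [h2, Real.norm_eq_abs]
    _ ≤ |s| * |s - 0| := intervalIntegral.norm_integral_le_of_norm_le_const hb
    _ = s ^ 2 := by rw [sub_zero, abs_mul_abs_self, sq]

private lemma aux_cos_taylor (θ s : ℝ) :
    |Real.cos (θ + s) - Real.cos θ + s * Real.sin θ| ≤ s ^ 2 := by
  have hcont : Continuous fun u : ℝ => Real.sin (θ + u) :=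
    Real.continuous_sin.comp (continuous_const.add continuous_id)
  have h2 : (∫ u in (0:ℝ)..s, (Real.sin θ - Real.sin (θ + u)))
      = Real.cos (θ + s) - Real.cos θ + s * Real.sin θ := by
    rw [intervalIntegral.integral_sub (intervalIntegrable_const)
      (hcont.intervalIntegrable _ _), intervalIntegral.integral_const]
    have h3 : (∫ u in (0:ℝ)..s, Real.sin (θ + u)) = ∫ u in θ..(θ + s), Real.sin u := by
      simpa using intervalIntegral.integral_comp_add_left (a := (0:ℝ)) (b := s) Real.sin θ
    rw [h3, integral_sin]
    simp
    ring
  have hb : ∀ u ∈ Set.uIoc (0:ℝ) s, ‖Real.sin θ - Real.sin (θ + u)‖ ≤ |s| := by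
    intro u hu
    calc ‖Real.sin θ - Real.sin (θ + u)‖ ≤ |θ - (θ + u)| := aux_abs_sin_sub_sin _ _
      _ = |u| := by rw [show θ - (θ + u) = -u by ring, abs_neg]
      _ ≤ |s| := aux_uIoc_abs hu
  calc |Real.cos (θ + s) - Real.cos θ + s * Real.sin θ|
      = ‖∫ u in (0:ℝ)..s, (Real.sin θ - Real.sin (θ + u))‖ := by rw [h2, Real.norm_eq_abs]
    _ ≤ |s| * |s - 0| := intervalIntegral.norm_integral_le_of_norm_le_const hb
    _ = s ^ 2 := by rw [sub_zero, abs_mul_abs_self, sq]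

private noncomputable def xsMap (n : ℕ) (ω : ℝ) : C(↥(Set.Icc (0:ℝ) 1), ℝ) :=
  ⟨fun x => (x:ℝ)^n * Real.sin (ω * x), by fun_prop⟩

private noncomputable def xcMap (n : ℕ) (ω : ℝ) : C(↥(Set.Icc (0:ℝ) 1), ℝ) :=
  ⟨fun x => (x:ℝ)^n * Real.cos (ω * x), by fun_prop⟩

private def Gset : Set C(↥(Set.Icc (0:ℝ) 1), ℝ) :=
  {g | ∃ ω ∈ Set.Icc (0:ℝ) (2*π), g = xsMap 0 ω ∨ g = xcMap 0 ω}

private noncomputable def Ssub : Submodule ℝ C(↥(Set.Icc (0:ℝ) 1), ℝ) :=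
  (Submodule.span ℝ Gset).topologicalClosure

private lemma exists_step (ω δ : ℝ) (hω : ω ∈ Set.Icc (0:ℝ) (2*π)) (hδ : 0 < δ) :
    ∃ t : ℝ, t ≠ 0 ∧ |t| ≤ δ ∧ ω + t ∈ Set.Icc (0:ℝ) (2*π) := by
  obtain ⟨h0, h2⟩ := hω
  have hpi := Real.pi_gt_three
  rcases le_or_gt ω π with h | h
  · refine ⟨min δ 1, ?_, ?_, ?_, ?_⟩
    · positivity
    · rw [abs_of_pos (by positivity)]; exact min_le_left _ _
    · have : (0:ℝ) < min δ 1 := by positivity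
      linarith
    · have : min δ 1 ≤ 1 := min_le_right _ _
      linarith
  · refine ⟨-(min δ 1), ?_, ?_, ?_, ?_⟩
    · have : (0:ℝ) < min δ 1 := by positivity
      intro hc; rw [neg_eq_zero] at hc; linarith
    · rw [abs_neg, abs_of_pos (by positivity)]; exact min_le_left _ _
    · have : min δ 1 ≤ 1 := min_le_right _ _
      linarith
    · have : (0:ℝ) < min δ 1 := by positivity
      linarith

private lemma mem_Ssub_near (g : C(↥(Set.Icc (0:ℝ) 1), ℝ))
    (hg : ∀ δ : ℝ, 0 < δ → ∃ h ∈ Ssub, dist g h ≤ δ) : g ∈ Ssub := by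
  have hclosed : IsClosed (Ssub : Set C(↥(Set.Icc (0:ℝ) 1), ℝ)) :=
    Submodule.isClosed_topologicalClosure _
  have : g ∈ closure (Ssub : Set C(↥(Set.Icc (0:ℝ) 1), ℝ)) := by
    rw [Metric.mem_closure_iff]
    intro δ hδ
    obtain ⟨h, hhS, hdist⟩ := hg (δ/2) (by linarith)
    exact ⟨h, hhS, lt_of_le_of_lt hdist (by linarith)⟩
  rwa [hclosed.closure_eq] at this

private lemma mem_Ssub_trig : ∀ (n : ℕ), ∀ ω ∈ Set.Icc (0:ℝ) (2*π),
    xsMap n ω ∈ Ssub ∧ xcMap n ω ∈ Ssub := by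
  intro n
  induction n with
  | zero =>
    intro ω hω
    exact ⟨Submodule.le_topologicalClosure _ (Submodule.subset_span ⟨ω, hω, Or.inl rfl⟩),
           Submodule.le_topologicalClosure _ (Submodule.subset_span ⟨ω, hω, Or.inr rfl⟩)⟩
  | succ n ih =>
    intro ω hω
    constructor
    · -- xsMap (n+1) ω ≈ -(xcMap n (ω+t) - xcMap n ω)/t
      apply mem_Ssub_near
      intro δ hδ
      obtain ⟨t, ht0, htδ, htab⟩ := exists_step ω δ hω hδ
      refine ⟨(-t⁻¹) • (xcMap n (ω+t) - xcMap n ω),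
        Submodule.smul_mem _ _ (Submodule.sub_mem _ (ih (ω+t) htab).2 (ih ω hω).2), ?_⟩
      rw [ContinuousMap.dist_le hδ.le]
      intro x
      obtain ⟨hx0, hx1⟩ := x.2
      rw [Real.dist_eq]
      simp only [xsMap, xcMap, ContinuousMap.smul_apply, ContinuousMap.sub_apply,
        ContinuousMap.coe_mk, smul_eq_mul]
      have key : ((x:ℝ)^(n+1) * Real.sin (ω * x))
          - (-t⁻¹ * ((x:ℝ)^n * Real.cos ((ω+t) * x) - (x:ℝ)^n * Real.cos (ω * x)))
          = ((x:ℝ)^n / t) * (Real.cos (ω*x + t*x) - Real.cos (ω*x) + (t*x) * Real.sin (ω*x)) := by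
        rw [show (ω+t) * (x:ℝ) = ω*x + t*x by ring]
        field_simp
        ring
      rw [key, abs_mul]
      calc |(x:ℝ)^n / t| * |Real.cos (ω*x + t*x) - Real.cos (ω*x) + (t*x) * Real.sin (ω*x)|
          ≤ |(x:ℝ)^n / t| * (t*x)^2 := by
            gcongr
            exact aux_cos_taylor _ _
        _ = (x:ℝ)^n * (x:ℝ)^2 * |t| := by
            rw [abs_div, abs_pow, abs_of_nonneg hx0, mul_pow]
            have ht : |t| ≠ 0 := abs_ne_zero.mpr ht0
            field_simp
            rw [pow_two t, ← abs_mul_abs_self t]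
            ring
        _ ≤ 1 * 1 * δ := by
            gcongr <;> first | exact pow_le_one₀ hx0 hx1 | exact htδ
        _ = δ := by ring
    · -- xcMap (n+1) ω ≈ (xsMap n (ω+t) - xsMap n ω)/t
      apply mem_Ssub_near
      intro δ hδ
      obtain ⟨t, ht0, htδ, htab⟩ := exists_step ω δ hω hδ
      refine ⟨(t⁻¹) • (xsMap n (ω+t) - xsMap n ω),
        Submodule.smul_mem _ _ (Submodule.sub_mem _ (ih (ω+t) htab).1 (ih ω hω).1), ?_⟩
      rw [ContinuousMap.dist_le hδ.le]
      intro x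
      obtain ⟨hx0, hx1⟩ := x.2
      rw [Real.dist_eq]
      simp only [xsMap, xcMap, ContinuousMap.smul_apply, ContinuousMap.sub_apply,
        ContinuousMap.coe_mk, smul_eq_mul]
      have key : ((x:ℝ)^(n+1) * Real.cos (ω * x))
          - (t⁻¹ * ((x:ℝ)^n * Real.sin ((ω+t) * x) - (x:ℝ)^n * Real.sin (ω * x)))
          = (-((x:ℝ)^n / t)) * (Real.sin (ω*x + t*x) - Real.sin (ω*x) - (t*x) * Real.cos (ω*x)) := by
        rw [show (ω+t) * (x:ℝ) = ω*x + t*x by ring]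
        field_simp
        ring
      rw [key, abs_mul, abs_neg]
      calc |(x:ℝ)^n / t| * |Real.sin (ω*x + t*x) - Real.sin (ω*x) - (t*x) * Real.cos (ω*x)|
          ≤ |(x:ℝ)^n / t| * (t*x)^2 := by
            gcongr
            exact aux_sin_taylor _ _
        _ = (x:ℝ)^n * (x:ℝ)^2 * |t| := by
            rw [abs_div, abs_pow, abs_of_nonneg hx0, mul_pow]
            have ht : |t| ≠ 0 := abs_ne_zero.mpr ht0
            field_simp
            rw [pow_two t, ← abs_mul_abs_self t]
            ring
        _ ≤ 1 * 1 * δ := by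
            gcongr <;> first | exact pow_le_one₀ hx0 hx1 | exact htδ
        _ = δ := by ring

private lemma mem_Ssub_poly (p : Polynomial ℝ) :
    p.toContinuousMapOn (Set.Icc (0:ℝ) 1) ∈ Ssub := by
  have h : p.toContinuousMapOn (Set.Icc (0:ℝ) 1)
      = ∑ i ∈ Finset.range (p.natDegree + 1), p.coeff i • xcMap i 0 := by
    ext x
    simp only [ContinuousMap.sum_apply, ContinuousMap.smul_apply, xcMap,
      ContinuousMap.coe_mk, smul_eq_mul, zero_mul, Real.cos_zero, mul_one,
      Polynomial.toContinuousMapOn_apply, Polynomial.toContinuousMap_apply]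
    exact Polynomial.eval_eq_sum_range _
  rw [h]
  exact Submodule.sum_mem _ fun i _ =>
    Submodule.smul_mem _ _ (mem_Ssub_trig i 0 ⟨le_refl 0, by positivity⟩).2

private lemma mem_Ssub_all (F : C(↥(Set.Icc (0:ℝ) 1), ℝ)) : F ∈ Ssub := by
  have h1 : (polynomialFunctions (Set.Icc (0:ℝ) 1) : Set C(↥(Set.Icc (0:ℝ) 1), ℝ))
      ⊆ ↑Ssub := by
    intro g hg
    rw [polynomialFunctions_coe] at hg
    obtain ⟨p, rfl⟩ := hg
    exact mem_Ssub_poly p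
  have h2 : closure (polynomialFunctions (Set.Icc (0:ℝ) 1) :
      Set C(↥(Set.Icc (0:ℝ) 1), ℝ)) = Set.univ := by
    rw [← Subalgebra.topologicalClosure_coe, polynomialFunctions_closure_eq_top 0 1]
    rfl
  have h3 : F ∈ closure (polynomialFunctions (Set.Icc (0:ℝ) 1) :
      Set C(↥(Set.Icc (0:ℝ) 1), ℝ)) := by rw [h2]; trivial
  have h4 := closure_mono h1 h3
  have h5 : IsClosed (Ssub : Set C(↥(Set.Icc (0:ℝ) 1), ℝ)) := by
    unfold Ssub; exact Submodule.isClosed_topologicalClosure _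
  rwa [h5.closure_eq] at h4

private lemma sum_range_pair (u : ℕ → ℝ) (n : ℕ) :
    ∑ k ∈ Finset.range (2*n), u k = ∑ i ∈ Finset.range n, (u (2*i) + u (2*i+1)) := by
  induction n with
  | zero => simp
  | succ n ih =>
    rw [Finset.sum_range_succ, ← ih, show 2*(n+1) = (2*n+1)+1 by ring,
      Finset.sum_range_succ, Finset.sum_range_succ]
    ring

private lemma pair_identity (θ aa bb φ₁ φ₂ d : ℝ) (hd : d ≠ 0)
    (hsin : Real.sin φ₂ * Real.cos φ₁ - Real.cos φ₂ * Real.sin φ₁ = d) :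
    (aa * Real.sin φ₂ - bb * Real.cos φ₂) / d * Real.sin (θ + φ₁)
      + (-(aa * Real.sin φ₁) + bb * Real.cos φ₁) / d * Real.sin (θ + φ₂)
      = aa * Real.sin θ + bb * Real.cos θ := by
  rw [Real.sin_add, Real.sin_add]
  field_simp
  linear_combination (aa * Real.sin θ + bb * Real.cos θ) * hsin

/-- Sinusoidal universal approximation theorem for one-dimensional continuous functions,
with linearly spaced phases `k α / (N + 1)`. -/
theorem sinusoidal_approximation_1d (f : ℝ → ℝ)
    (hf : ContinuousOn f (Set.Icc (0:ℝ) 1))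
    (α : ℝ) (hα₀ : 0 < α) (hα₁ : α ≤ π / 2)
    (ε : ℝ) (hε : 0 < ε) :
    ∃ N₀ : ℕ, ∀ N > N₀, ∃ ω A : ℕ → ℝ,
      (∀ k ≤ N, ω k ∈ Set.Icc (0:ℝ) (2 * π)) ∧
      ∀ x ∈ Set.Icc (0:ℝ) 1,
        |f x - ∑ k ∈ Finset.range (N + 1),
          A k * Real.sin (ω k * x + k * α / (N + 1))| < ε := by
  set F : C(↥(Set.Icc (0:ℝ) 1), ℝ) := ⟨(Set.Icc (0:ℝ) 1).restrict f, hf.restrict⟩ with hFdef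
  have hF : F ∈ closure ((Submodule.span ℝ Gset : Submodule ℝ _) :
      Set C(↥(Set.Icc (0:ℝ) 1), ℝ)) := by
    rw [← Submodule.topologicalClosure_coe]
    exact mem_Ssub_all F
  obtain ⟨g, hgspan, hgdist⟩ := Metric.mem_closure_iff.mp hF ε hε
  obtain ⟨n, c, v, hsum⟩ := Submodule.mem_span_set'.mp hgspan
  have hv : ∀ i : Fin n, ∃ w a b, w ∈ Set.Icc (0:ℝ) (2*π) ∧
      ∀ x : ↥(Set.Icc (0:ℝ) 1), c i • ((v i : C(↥(Set.Icc (0:ℝ) 1), ℝ)) x)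
        = a * Real.sin (w * x) + b * Real.cos (w * x) := by
    intro i
    obtain ⟨w, hw, hcase⟩ := (v i).2
    rcases hcase with hc | hc
    · refine ⟨w, c i, 0, hw, fun x => ?_⟩
      simp [hc, xsMap, smul_eq_mul]
    · refine ⟨w, 0, c i, hw, fun x => ?_⟩
      simp [hc, xcMap, smul_eq_mul]
  choose W av bv hW hab using hv
  set W' : ℕ → ℝ := fun i => if h : i < n then W ⟨i, h⟩ else 0 with hW'def
  set av' : ℕ → ℝ := fun i => if h : i < n then av ⟨i, h⟩ else 0 with hav'def
  set bv' : ℕ → ℝ := fun i => if h : i < n then bv ⟨i, h⟩ else 0 with hbv'def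
  have hW'mem : ∀ j, W' j ∈ Set.Icc (0:ℝ) (2*π) := by
    intro j
    rw [hW'def]
    dsimp only
    split
    · exact hW _
    · exact ⟨le_refl 0, by positivity⟩
  have hgx : ∀ (x : ↥(Set.Icc (0:ℝ) 1)), g x
      = ∑ i ∈ Finset.range n,
          (av' i * Real.sin (W' i * x) + bv' i * Real.cos (W' i * x)) := by
    intro x
    rw [← hsum, ContinuousMap.sum_apply, Finset.sum_range]
    refine Finset.sum_congr rfl fun i _ => ?_
    rw [ContinuousMap.smul_apply]
    rw [hW'def, hav'def, hbv'def]
    dsimp only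
    rw [dif_pos i.isLt, dif_pos i.isLt, dif_pos i.isLt, Fin.eta]
    exact hab i x
  refine ⟨2 * n, fun N hN => ?_⟩
  have hN1 : (0:ℝ) < (N:ℝ) + 1 := by positivity
  set d := Real.sin (α / ((N:ℝ) + 1)) with hddef
  have hd : 0 < d := by
    rw [hddef]
    apply Real.sin_pos_of_pos_of_lt_pi
    · positivity
    · calc α / ((N:ℝ)+1) ≤ α := by
            apply div_le_self hα₀.le
            linarith [Nat.cast_nonneg (α := ℝ) N]
        _ ≤ π/2 := hα₁
        _ < π := by linarith [Real.pi_pos]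
  set A : ℕ → ℝ := fun k =>
    if 1 ≤ k ∧ k ≤ 2*n then
      (if k % 2 = 1 then
         (av' ((k-1)/2) * Real.sin (((k:ℝ)+1) * α / ((N:ℝ)+1))
           - bv' ((k-1)/2) * Real.cos (((k:ℝ)+1) * α / ((N:ℝ)+1))) / d
       else
         (-(av' ((k-1)/2) * Real.sin (((k:ℝ)-1) * α / ((N:ℝ)+1)))
           + bv' ((k-1)/2) * Real.cos (((k:ℝ)-1) * α / ((N:ℝ)+1))) / d)
    else 0 with hAdef
  set Ω : ℕ → ℝ := fun k => if 1 ≤ k ∧ k ≤ 2*n then W' ((k-1)/2) else 0 with hΩdef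
  refine ⟨Ω, A, ?_, ?_⟩
  · intro k _
    rw [hΩdef]
    dsimp only
    split
    · exact hW'mem _
    · exact ⟨le_refl 0, by positivity⟩
  · intro x hx
    have hsum2 : ∑ k ∈ Finset.range (N + 1),
        A k * Real.sin (Ω k * x + (k:ℝ) * α / ((N:ℝ) + 1)) = g ⟨x, hx⟩ := by
      have hzero : ∀ k ∈ Finset.range (N+1), k ∉ Finset.range (2*n+1) →
          A k * Real.sin (Ω k * x + (k:ℝ) * α / ((N:ℝ)+1)) = 0 := by
        intro k _ hk
        have hcond : ¬(1 ≤ k ∧ k ≤ 2*n) := by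
          simp only [Finset.mem_range] at hk
          omega
        rw [hAdef]
        dsimp only
        rw [if_neg hcond, zero_mul]
      rw [← Finset.sum_subset (Finset.range_subset_range.mpr (by omega : 2*n+1 ≤ N+1)) hzero]
      rw [Finset.sum_range_succ']
      have hA0 : A 0 * Real.sin (Ω 0 * x + ((0:ℕ):ℝ) * α / ((N:ℝ)+1)) = 0 := by
        rw [hAdef]
        dsimp only
        norm_num
      rw [hA0, add_zero]
      rw [sum_range_pair
        (fun k => A (k+1) * Real.sin (Ω (k+1) * x + ((k+1:ℕ):ℝ) * α / ((N:ℝ)+1))) n]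
      rw [hgx ⟨x, hx⟩]
      refine Finset.sum_congr rfl fun i hi => ?_
      have hin : i < n := Finset.mem_range.mp hi
      have e1 : A (2*i+1) = (av' i * Real.sin (((2*(i:ℝ)+2)) * α / ((N:ℝ)+1))
          - bv' i * Real.cos (((2*(i:ℝ)+2)) * α / ((N:ℝ)+1))) / d := by
        rw [hAdef]
        dsimp only
        rw [if_pos ⟨by omega, by omega⟩, if_pos (by omega : (2*i+1) % 2 = 1),
          show (2*i+1-1)/2 = i by omega]
        push_cast
        ring_nf
      have e2 : A (2*i+2) = (-(av' i * Real.sin (((2*(i:ℝ)+1)) * α / ((N:ℝ)+1)))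
          + bv' i * Real.cos (((2*(i:ℝ)+1)) * α / ((N:ℝ)+1))) / d := by
        rw [hAdef]
        dsimp only
        rw [if_pos ⟨by omega, by omega⟩, if_neg (by omega : ¬((2*i+2) % 2 = 1)),
          show (2*i+2-1)/2 = i by omega]
        push_cast
        ring_nf
      have e3 : Ω (2*i+1) = W' i := by
        rw [hΩdef]
        dsimp only
        rw [if_pos ⟨by omega, by omega⟩, show (2*i+1-1)/2 = i by omega]
      have e4 : Ω (2*i+2) = W' i := by
        rw [hΩdef]
        dsimp only
        rw [if_pos ⟨by omega, by omega⟩, show (2*i+2-1)/2 = i by omega]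
      have hsin : Real.sin ((2*(i:ℝ)+2) * α / ((N:ℝ)+1)) * Real.cos ((2*(i:ℝ)+1) * α / ((N:ℝ)+1))
          - Real.cos ((2*(i:ℝ)+2) * α / ((N:ℝ)+1)) * Real.sin ((2*(i:ℝ)+1) * α / ((N:ℝ)+1))
          = d := by
        rw [← Real.sin_sub, hddef]
        congr 1
        field_simp
        ring
      have hφ1 : ((2*i+1 : ℕ):ℝ) * α / ((N:ℝ)+1) = (2*(i:ℝ)+1) * α / ((N:ℝ)+1) := by
        push_cast; ring
      have hφ2 : ((2*i+1+1 : ℕ):ℝ) * α / ((N:ℝ)+1) = (2*(i:ℝ)+2) * α / ((N:ℝ)+1) := by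
        push_cast; ring
      rw [show 2*i+1+1 = 2*i+2 from rfl] at hφ2
      rw [e1, e2, e3, e4, hφ1, hφ2]
      exact pair_identity (W' i * x) (av' i) (bv' i) _ _ d hd.ne' hsin
    have hfF : f x = F ⟨x, hx⟩ := rfl
    calc |f x - ∑ k ∈ Finset.range (N + 1),
            A k * Real.sin (Ω k * x + (k:ℝ) * α / ((N:ℝ) + 1))|
        = dist (F ⟨x, hx⟩) (g ⟨x, hx⟩) := by rw [hsum2, Real.dist_eq, hfF]
      _ ≤ dist F g := ContinuousMap.dist_apply_le_dist _
      _ < ε := hgdist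
end

section
/- Any continuous function f : [0,1]^n → ℝ can be written as f(x_1,…,x_n) = Σ_{q=1}^{2n+1} φ_q(Σ_{p=1}^{n} ψ_{pq}(x_p)), where φ_q : ℝ → ℝ and ψ_{pq} : [0,1] → ℝ are continuous functions of one variable. -/
/-!
Fix inner functions `Ψ` and let `T q x = ∑ p, Ψ (x p) p q` for `q < 2n + 1`. Suppose that at every
scale `d`, each `T q` sends suitable cells of diameter `< d` into `u / 4`-neighbourhoods of
`u`-separated values, and that every point of the cube lies in such cells for at least `n + 1` of
the channels `q`. Then for continuous `g`, sums of tents centred at these values give outer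
functions `φ q` with `‖φ q‖ ≤ ‖g‖ / (n + 1)` and `‖g - ∑ q, φ q ∘ T q‖ ≤ (2n + 1) / (2n + 2) * ‖g‖`,
so the bounded linear map `φ ↦ ∑ q, φ q ∘ T q` is onto: the corrections form a geometric series.

Suitable `Ψ` exist by Baire's theorem in `C([0, 1], ℝ^{n × (2n + 1)})`. The cells of channel `q`
have length `2n / K` and are separated by gaps of length `1 / K`, shifted by `q / K`, so each
coordinate lies in a gap of at most one channel. Near any `Ψ` there is a staircase function that
is constant on the cells, its value on the `t`-th cell being `Ψ` rounded to the grid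
`v (K + 1)^n ℤ` plus the digit term `v t (K + 1)^p`. The sums over distinct tuples of cells are
then distinct multiples of `v`, and this separation persists in a ball around the staircase
function.
-/

open Finset Filter Topology BoundedContinuousFunction
open scoped unitInterval

theorem ContinuousLinearMap.surjective_of_approx_preimage {E F : Type*} [NormedAddCommGroup E]
    [NormedSpace ℝ E] [CompleteSpace E] [NormedAddCommGroup F] [NormedSpace ℝ F]
    (A : E →L[ℝ] F) {C θ : ℝ} (hθ₀ : 0 ≤ θ) (hθ : θ < 1)
    (happrox : ∀ y, ∃ x, ‖x‖ ≤ C * ‖y‖ ∧ ‖y - A x‖ ≤ θ * ‖y‖) :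
    Function.Surjective A := by
  choose s hs using happrox
  intro y
  set r : ℕ → F := fun j => (fun z => z - A (s z))^[j] y
  have hr_succ (j : ℕ) : r (j + 1) = r j - A (s (r j)) :=
    Function.iterate_succ_apply' _ _ _
  have hr_norm (j : ℕ) : ‖r j‖ ≤ θ ^ j * ‖y‖ := by
    induction j with
    | zero => simp [r]
    | succ j ih =>
      calc ‖r (j + 1)‖ ≤ θ * ‖r j‖ := hr_succ j ▸ (hs _).2
        _ ≤ θ * (θ ^ j * ‖y‖) := by gcongr
        _ = θ ^ (j + 1) * ‖y‖ := by ring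
  have hsum : Summable fun j => s (r j) := by
    refine .of_norm_bounded ((summable_geometric_of_lt_one hθ₀ hθ).mul_left (|C| * ‖y‖))
      fun j => ?_
    calc ‖s (r j)‖ ≤ C * ‖r j‖ := (hs _).1
      _ ≤ |C| * (θ ^ j * ‖y‖) := by gcongr; exacts [le_abs_self C, hr_norm j]
      _ = |C| * ‖y‖ * θ ^ j := by ring
  have hpartial (J : ℕ) : A (∑ j ∈ range J, s (r j)) = y - r J := by
    have hstep (j : ℕ) : A (s (r j)) = r j - r (j + 1) := by rw [hr_succ, sub_sub_cancel]
    simp_rw [map_sum, hstep, sum_range_sub']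
    rfl
  have hr_zero : Tendsto r atTop (𝓝 0) :=
    squeeze_zero_norm hr_norm (by simpa using
      (tendsto_pow_atTop_nhds_zero_of_lt_one hθ₀ hθ).mul_const ‖y‖)
  refine ⟨∑' j, s (r j), tendsto_nhds_unique ((A.continuous.tendsto _).comp
    hsum.hasSum.tendsto_sum_nat) ?_⟩
  simpa [Function.comp_def, hpartial] using tendsto_const_nhds.sub hr_zero

noncomputable def superposition {X ι : Type*} [Fintype ι] [TopologicalSpace X]
    (T : ι → C(X, ℝ)) : (ι → ℝ →ᵇ ℝ) →L[ℝ] X →ᵇ ℝ :=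
  ∑ q, (compContinuousCLM ℝ ℝ (T q)).comp (ContinuousLinearMap.proj q)

theorem superposition_apply {X ι : Type*} [Fintype ι] [TopologicalSpace X] (T : ι → C(X, ℝ))
    (φ : ι → ℝ →ᵇ ℝ) (x : X) :
    superposition T φ x = ∑ q, φ q (T q x) := by
  simp [superposition]

def SeparatesAt {X ι : Type*} [PseudoMetricSpace X] (T : ι → X → ℝ) (k : ℕ) (d : ℝ) : Prop :=
  ∃ (κ : Type) (_ : Fintype κ) (S : ι → κ → ℝ) (ξ : ι → κ → X) (u : ℝ), 0 < u ∧
    (∀ q, Pairwise fun a b => u ≤ |S q a - S q b|) ∧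
    ∀ x, ∃ G : Finset ι, k ≤ #G ∧
      ∀ q ∈ G, ∃ a, dist x (ξ q a) < d ∧ |T q x - S q a| ≤ u / 4

theorem SeparatesAt.mono {X ι : Type*} [PseudoMetricSpace X] {T : ι → X → ℝ} {k : ℕ} {d d' : ℝ}
    (h : SeparatesAt T k d) (hd : d ≤ d') : SeparatesAt T k d' := by
  obtain ⟨κ, _, S, ξ, u, hu, hS, hx⟩ := h
  refine ⟨κ, inferInstance, S, ξ, u, hu, hS, fun x => ?_⟩
  obtain ⟨G, hG, hq⟩ := hx x
  exact ⟨G, hG, fun q hqG => (hq q hqG).imp fun a ha => ⟨ha.1.trans_le hd, ha.2⟩⟩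

noncomputable def ramp (s : ℝ) : ℝ := Set.projIcc (0 : ℝ) 1 zero_le_one s

@[fun_prop]
theorem continuous_ramp : Continuous ramp :=
  continuous_subtype_val.comp continuous_projIcc

theorem ramp_mem_Icc (s : ℝ) : ramp s ∈ Set.Icc (0 : ℝ) 1 := (Set.projIcc _ _ _ s).2

theorem ramp_of_nonpos {s : ℝ} (hs : s ≤ 0) : ramp s = 0 := by
  simp [ramp, Set.projIcc_of_le_left _ hs]

theorem ramp_of_one_le {s : ℝ} (hs : 1 ≤ s) : ramp s = 1 := by
  simp [ramp, Set.projIcc_of_right_le _ hs]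

theorem sum_range_ramp_eq (b c : ℕ → ℝ) {s : ℝ} {j N : ℕ} (hj : j < N)
    (hlo : ∀ t < j, b t + 1 ≤ s) (hhi : ∀ t, j < t → s ≤ b t) :
    c 0 + ∑ t ∈ range N, ramp (s - b t) * (c (t + 1) - c t) =
      c j + ramp (s - b j) * (c (j + 1) - c j) := by
  have hbelow : ∑ t ∈ range j, ramp (s - b t) * (c (t + 1) - c t) = c j - c 0 := by
    rw [← sum_range_sub]
    refine sum_congr rfl fun t ht => ?_
    rw [ramp_of_one_le (by linarith [hlo t (mem_range.1 ht)]), one_mul]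
  have habove : ∑ t ∈ Ico (j + 1) N, ramp (s - b t) * (c (t + 1) - c t) = 0 :=
    sum_eq_zero fun t ht => by
      rw [ramp_of_nonpos (by linarith [hhi t (mem_Ico.1 ht).1]), zero_mul]
  rw [← sum_range_add_sum_Ico _ hj, sum_range_succ, hbelow, habove]
  ring

noncomputable def tent (y r : ℝ) : ℝ →ᵇ ℝ :=
  .mkOfBound ⟨fun t => ramp (2 - |t - y| / r), by fun_prop⟩ 1
    fun _ _ => Real.dist_le_of_mem_Icc_01 (ramp_mem_Icc _) (ramp_mem_Icc _)

theorem tent_apply (y r t : ℝ) : tent y r t = ramp (2 - |t - y| / r) := rfl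

theorem tent_apply_of_le {y r t : ℝ} (hr : 0 < r) (h : |t - y| ≤ r) : tent y r t = 1 := by
  rw [tent_apply, ramp_of_one_le]
  have : |t - y| / r ≤ 1 := (div_le_one hr).2 h
  linarith

theorem tent_apply_of_two_mul_le {y r t : ℝ} (hr : 0 < r) (h : 2 * r ≤ |t - y|) :
    tent y r t = 0 := by
  rw [tent_apply, ramp_of_nonpos]
  have : 2 ≤ |t - y| / r := (le_div_iff₀ hr).2 (by linarith)
  linarith

section LevelSum

variable {κ : Type*} {S : κ → ℝ} {u : ℝ}

theorem tent_eq_zero_of_separated (hS : Pairwise fun a b => u ≤ |S a - S b|) (hu : 0 < u)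
    {a b : κ} (hab : b ≠ a) {t : ℝ} (ht : |t - S a| < u / 2) : tent (S b) (u / 4) t = 0 := by
  refine tent_apply_of_two_mul_le (by positivity) ?_
  have := hS hab
  have := abs_sub_le (S b) t (S a)
  rw [abs_sub_comm (S b) t] at this
  linarith

theorem sum_tent_apply_of_le [Fintype κ] (hS : Pairwise fun a b => u ≤ |S a - S b|) (hu : 0 < u)
    (w : κ → ℝ) {a : κ} {t : ℝ} (ht : |t - S a| ≤ u / 4) :
    (∑ b, w b • tent (S b) (u / 4)) t = w a := by
  rw [BoundedContinuousFunction.coe_sum, Finset.sum_apply,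
    Finset.sum_eq_single a (fun b _ hb => ?_) (by simp)]
  · rw [BoundedContinuousFunction.smul_apply, tent_apply_of_le (by positivity) ht, smul_eq_mul,
      mul_one]
  · rw [BoundedContinuousFunction.smul_apply, tent_eq_zero_of_separated hS hu hb (by linarith),
      smul_zero]

theorem norm_sum_tent_le [Fintype κ] (hS : Pairwise fun a b => u ≤ |S a - S b|) (hu : 0 < u)
    {w : κ → ℝ} {W : ℝ} (hW : 0 ≤ W) (hw : ∀ a, |w a| ≤ W) :
    ‖∑ b, w b • tent (S b) (u / 4)‖ ≤ W := by
  refine (norm_le hW).2 fun t => ?_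
  rw [BoundedContinuousFunction.coe_sum, Finset.sum_apply, Real.norm_eq_abs]
  by_cases h : ∃ a, |t - S a| < u / 2
  · obtain ⟨a, ha⟩ := h
    rw [Finset.sum_eq_single a (fun b _ hb => by
        rw [BoundedContinuousFunction.smul_apply, tent_eq_zero_of_separated hS hu hb ha,
          smul_zero]) (by simp),
      BoundedContinuousFunction.smul_apply, smul_eq_mul, abs_mul, tent_apply,
      abs_of_nonneg (ramp_mem_Icc _).1]
    exact (mul_le_of_le_one_right (abs_nonneg _) (ramp_mem_Icc _).2).trans (hw a)
  · simp only [not_exists, not_lt] at h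
    rw [Finset.sum_eq_zero fun b _ => by
      rw [BoundedContinuousFunction.smul_apply,
        tent_apply_of_two_mul_le (by positivity) (by linarith [h b]), smul_zero], abs_zero]
    exact hW

end LevelSum

theorem abs_sub_sum_le_of_le_card {ι : Type*} [Fintype ι] (G : Finset ι) {k : ℕ} (hk : 0 < k)
    (hG : k ≤ #G) (z : ι → ℝ) {a M ω : ℝ} (ha : |a| ≤ M) (hω : 0 ≤ ω)
    (hgood : ∀ q ∈ G, |z q - a / k| ≤ ω / k) (hall : ∀ q, |z q| ≤ M / k) :
    |a - ∑ q, z q| ≤ ((Fintype.card ι - k) * M + Fintype.card ι * ω) / k := by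
  classical
  have hk' : (0 : ℝ) < k := by exact_mod_cast hk
  have hGk : (k : ℝ) ≤ #G := by exact_mod_cast hG
  have hGc : (#G : ℝ) ≤ Fintype.card ι := by exact_mod_cast card_le_univ G
  have hGcompl : (#Gᶜ : ℝ) = Fintype.card ι - #G := by
    rw [card_compl, Nat.cast_sub (card_le_univ G)]
  have hsplit : a - ∑ q, z q
      = (1 - #G / k) * a - ∑ q ∈ G, (z q - a / k) - ∑ q ∈ Gᶜ, z q := by
    rw [← sum_add_sum_compl G z, sum_sub_distrib, sum_const, nsmul_eq_mul]
    ring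
  have h₁ : |(1 - #G / k) * a| ≤ (#G / k - 1) * M := by
    rw [abs_mul, abs_of_nonpos (by rw [sub_nonpos, one_le_div hk']; exact hGk), neg_sub]
    exact mul_le_mul_of_nonneg_left ha (by rw [sub_nonneg, one_le_div hk']; exact hGk)
  have h₂ : |∑ q ∈ G, (z q - a / k)| ≤ #G * (ω / k) :=
    (abs_sum_le_sum_abs _ _).trans <| by simpa using sum_le_sum hgood
  have h₃ : |∑ q ∈ Gᶜ, z q| ≤ #Gᶜ * (M / k) :=
    (abs_sum_le_sum_abs _ _).trans <| by simpa using sum_le_sum fun q _ => hall q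
  rw [hsplit]
  calc _ ≤ (#G / k - 1) * M + #G * (ω / k) + #Gᶜ * (M / k) :=
        (abs_sub _ _).trans (add_le_add ((abs_sub _ _).trans (add_le_add h₁ h₂)) h₃)
    _ = ((Fintype.card ι - k) * M + #G * ω) / k := by rw [hGcompl]; field_simp; ring
    _ ≤ _ := by gcongr

theorem SeparatesAt.exists_approx {X ι : Type*} [PseudoMetricSpace X] [Fintype ι]
    {T : ι → X → ℝ} {k : ℕ} {d : ℝ} (hT : SeparatesAt T k d) (hk : 0 < k) {g : X → ℝ}
    {M ω : ℝ} (hM : 0 ≤ M) (hω : 0 ≤ ω) (hgM : ∀ x, |g x| ≤ M)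
    (hgω : ∀ x y, dist x y < d → |g x - g y| ≤ ω) :
    ∃ φ : ι → ℝ →ᵇ ℝ, (∀ q, ‖φ q‖ ≤ M / k) ∧
      ∀ x, |g x - ∑ q, φ q (T q x)| ≤
        ((Fintype.card ι - k) * M + Fintype.card ι * ω) / k := by
  classical
  obtain ⟨κ, _, S, ξ, u, hu, hS, hcover⟩ := hT
  set φ : ι → ℝ →ᵇ ℝ := fun q => ∑ a, (g (ξ q a) / k) • tent (S q a) (u / 4)
  have hφ (q : ι) : ‖φ q‖ ≤ M / k := by
    refine norm_sum_tent_le (hS q) hu (by positivity) fun a => ?_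
    rw [abs_div, Nat.abs_cast]
    gcongr
    exact hgM _
  refine ⟨φ, hφ, fun x => ?_⟩
  obtain ⟨G, hG, hGx⟩ := hcover x
  refine abs_sub_sum_le_of_le_card G hk hG _ (hgM x) hω (fun q hq => ?_) fun q =>
    (Real.norm_eq_abs _ ▸ norm_coe_le_norm _ _).trans (hφ q)
  obtain ⟨a, hxa, hTa⟩ := hGx q hq
  rw [sum_tent_apply_of_le (hS q) hu _ hTa, ← sub_div, abs_div, Nat.abs_cast, abs_sub_comm]
  gcongr
  exact hgω _ _ hxa

theorem superposition_surjective {X ι : Type*} [PseudoMetricSpace X] [CompactSpace X] [Fintype ι]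
    [Nonempty ι] (T : ι → C(X, ℝ)) {k : ℕ} (hk : Fintype.card ι < 2 * k)
    (hT : ∀ d > 0, SeparatesAt (fun q => ⇑(T q)) k d) :
    Function.Surjective (superposition T) := by
  have hk₀ : 0 < k := by omega
  have hc : (0 : ℝ) < Fintype.card ι := Nat.cast_pos.2 Fintype.card_pos
  have hck : (Fintype.card ι : ℝ) < 2 * k := by exact_mod_cast hk
  refine (superposition T).surjective_of_approx_preimage (C := 1 / k)
    (θ := Fintype.card ι / (2 * k)) (by positivity) ((div_lt_one (by positivity)).2 hck) fun g => ?_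
  rcases (norm_nonneg g).eq_or_lt' with hg | hg
  · exact ⟨0, by simp [hg], by simp [hg]⟩
  -- chosen so that `((card ι - k) * ‖g‖ + card ι * ω) / k = card ι / (2k) * ‖g‖`
  set ω := (2 * k - Fintype.card ι) * ‖g‖ / (2 * Fintype.card ι)
  have hω : 0 < ω := div_pos (mul_pos (by linarith) hg) (by positivity)
  obtain ⟨d, hd, hgd⟩ := Metric.uniformContinuous_iff.1
    (CompactSpace.uniformContinuous_of_continuous g.continuous) ω hω
  obtain ⟨φ, hφ, hφx⟩ := (hT d hd).exists_approx hk₀ hg.le hω.le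
    (fun x => Real.norm_eq_abs (g x) ▸ g.norm_coe_le_norm x) fun x y hxy => (hgd hxy).le
  refine ⟨φ, (pi_norm_le_iff_of_nonneg (by positivity)).2 fun q => (hφ q).trans_eq (by ring),
    (norm_le (by positivity)).2 fun x => ?_⟩
  rw [BoundedContinuousFunction.coe_sub, Pi.sub_apply, superposition_apply, Real.norm_eq_abs]
  refine (hφx x).trans_eq ?_
  simp only [ω]
  field_simp
  ring

theorem sub_le_card_compl_image {α β : Type*} [Fintype α] [Fintype β] [DecidableEq β]
    (f : α → β) : Fintype.card β - Fintype.card α ≤ #(univ.image f)ᶜ := by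
  rw [card_compl]
  have := card_image_le (s := univ) (f := f)
  rw [card_univ] at this
  omega

theorem abs_sub_apply_le_dist {α β : Type*} [Fintype α] [Fintype β] (f g : α → β → ℝ) (a : α)
    (b : β) : |f a b - g a b| ≤ dist f g := by
  rw [← Real.dist_eq]
  exact (dist_le_pi_dist (f a) (g a) b).trans (dist_le_pi_dist f g a)

theorem abs_mul_floor_add_sub_le {w e : ℝ} (hw : 0 < w) (he₀ : 0 ≤ e) (hew : e ≤ w) (y : ℝ) :
    |w * ⌊y / w⌋ + e - y| ≤ w := by
  have hfract : y - w * ⌊y / w⌋ = w * Int.fract (y / w) := by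
    rw [Int.fract, mul_sub, mul_div_cancel₀ _ hw.ne']
  have h₁ := mul_nonneg hw.le (Int.fract_nonneg (y / w))
  have h₂ := mul_le_of_le_one_right hw.le (Int.fract_lt_one (y / w)).le
  rw [abs_le]
  constructor <;> linarith

theorem le_abs_sub_of_ne {v : ℝ} (hv : 0 ≤ v) {N D D' : ℕ} (hD : D < N) (hD' : D' < N)
    (hDD' : D ≠ D') (Z Z' : ℤ) : v ≤ |(v * N * Z + v * D) - (v * N * Z' + v * D')| := by
  have hne : (N * (Z - Z') + (D - D') : ℤ) ≠ 0 := by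
    intro h
    have hdvd : (N : ℤ) ∣ (D : ℤ) - D' := ⟨Z' - Z, by linarith⟩
    have := Int.eq_zero_of_abs_lt_dvd hdvd (by rw [abs_lt]; constructor <;> omega)
    omega
  have hone : (1 : ℝ) ≤ |((N * (Z - Z') + (D - D') : ℤ) : ℝ)| := by
    exact_mod_cast Int.one_le_abs hne
  rw [show v * N * Z + v * D - (v * N * Z' + v * D') =
    v * ((N * (Z - Z') + (D - D') : ℤ) : ℝ) by push_cast; ring, abs_mul, abs_of_nonneg hv]
  exact le_mul_of_one_le_right hv hone

section DigitLevel

variable {n : ℕ}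

noncomputable def digitLevel (v : ℝ) (B : ℕ) (y : Fin n → ℕ → ℝ) (p : Fin n) (t : ℕ) : ℝ :=
  v * B ^ n * ⌊y p t / (v * B ^ n)⌋ + v * (t * B ^ (p : ℕ))

theorem abs_digitLevel_sub_le {v : ℝ} (hv : 0 < v) {B : ℕ} (hB : 0 < B) (y : Fin n → ℕ → ℝ)
    (p : Fin n) {t : ℕ} (ht : t ≤ B) : |digitLevel v B y p t - y p t| ≤ v * B ^ n := by
  have hB' : (1 : ℝ) ≤ B := by exact_mod_cast hB
  refine abs_mul_floor_add_sub_le (by positivity) (by positivity) ?_ _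
  gcongr
  calc (t : ℝ) * B ^ (p : ℕ) ≤ B * B ^ (p : ℕ) := by gcongr
    _ = B ^ ((p : ℕ) + 1) := by ring
    _ ≤ B ^ n := pow_le_pow_right₀ hB' p.2

theorem le_abs_sum_digitLevel_sub {v : ℝ} (hv : 0 ≤ v) {B : ℕ} (y : Fin n → ℕ → ℝ)
    {ι ι' : Fin n → Fin B} (hne : ι ≠ ι') :
    v ≤ |∑ p, digitLevel v B y p (ι p) - ∑ p, digitLevel v B y p (ι' p)| := by
  have hsum (κ : Fin n → Fin B) : ∑ p, digitLevel v B y p (κ p) =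
      v * (B ^ n : ℕ) * (∑ p, ⌊y p (κ p) / (v * B ^ n)⌋ : ℤ) + v * (finFunctionFinEquiv κ : ℕ) := by
    rw [finFunctionFinEquiv_apply]
    push_cast
    rw [mul_sum, mul_sum, ← sum_add_distrib]
    rfl
  rw [hsum, hsum]
  exact le_abs_sub_of_ne hv (finFunctionFinEquiv ι).isLt (finFunctionFinEquiv ι').isLt
    (fun h => hne (finFunctionFinEquiv.injective (Fin.ext h))) _ _

end DigitLevel

section Cells

variable {m : ℕ}

/-- In units of `1 / K`, channel `q` cuts `[0, 1]` into the cells `[t m + q + 1 - m, t m + q]`,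
separated by the gaps `(t m + q, t m + q + 1)`; a gap of channel `q` lies in `(r, r + 1)` with
`r % m = q`, so the gaps of distinct channels are disjoint. `cellIndex` is the index of the cell
containing `x`, or of the cell just before the gap containing `x`. -/
noncomputable def cellIndex (m K : ℕ) (q : Fin m) (x : ℝ) : ℕ := (⌊K * x⌋₊ + m - (q + 1)) / m

theorem cellIndex_spec (q : Fin m) (K : ℕ) {x : ℝ} (hx : 0 ≤ x) :
    (cellIndex m K q x * m + q + 1 : ℝ) - m ≤ K * x ∧
      K * x < cellIndex m K q x * m + q + 1 := by
  have hr := Nat.floor_le (mul_nonneg K.cast_nonneg hx)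
  have hr' := Nat.lt_floor_add_one ((K : ℝ) * x)
  have h₁ := Nat.div_mul_le_self (⌊K * x⌋₊ + m - (q + 1)) m
  have h₂ := Nat.lt_div_mul_add (a := ⌊K * x⌋₊ + m - (q + 1)) q.pos
  have h₃ : cellIndex m K q x * m + q + 1 ≤ ⌊K * x⌋₊ + m := by unfold cellIndex; omega
  have h₄ : ⌊K * x⌋₊ < cellIndex m K q x * m + q + 1 := by unfold cellIndex; omega
  constructor
  · have : ((cellIndex m K q x * m + q + 1 : ℕ) : ℝ) ≤ (⌊K * x⌋₊ + m : ℕ) := by exact_mod_cast h₃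
    push_cast at this
    linarith
  · have : ((⌊K * x⌋₊ + 1 : ℕ) : ℝ) ≤ (cellIndex m K q x * m + q + 1 : ℕ) := by exact_mod_cast h₄
    push_cast at this
    linarith

theorem cellIndex_le (q : Fin m) (K : ℕ) {x : ℝ} (hx : x ≤ 1) : cellIndex m K q x ≤ K := by
  have hr : ⌊K * x⌋₊ ≤ K :=
    Nat.floor_le_of_le (mul_le_of_le_one_right K.cast_nonneg hx)
  have h₁ := Nat.div_mul_le_self (⌊K * x⌋₊ + m - (q + 1)) m
  have h₂ := Nat.le_mul_of_pos_right K q.pos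
  by_contra! h
  have h₃ := Nat.mul_le_mul_right m h
  unfold cellIndex at h₃
  rw [Nat.succ_mul] at h₃
  omega

theorem mul_le_of_floor_mod_ne (q : Fin m) (K : ℕ) {x : ℝ}
    (hq : ⌊K * x⌋₊ % m ≠ q) : K * x ≤ cellIndex m K q x * m + q := by
  have hr' := Nat.lt_floor_add_one ((K : ℝ) * x)
  have h₁ := Nat.lt_div_mul_add (a := ⌊K * x⌋₊ + m - (q + 1)) q.pos
  have h₂ : ⌊K * x⌋₊ ≠ cellIndex m K q x * m + q := fun h =>
    hq (h ▸ Nat.mul_add_mod_of_lt q.2)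
  have h₃ : ⌊K * x⌋₊ + 1 ≤ cellIndex m K q x * m + q := by unfold cellIndex at h₂ ⊢; omega
  have : ((⌊K * x⌋₊ + 1 : ℕ) : ℝ) ≤ (cellIndex m K q x * m + q : ℕ) := by exact_mod_cast h₃
  push_cast at this
  linarith

noncomputable def cellSample (m K : ℕ) (q : Fin m) (t : ℕ) : I :=
  Set.projIcc 0 1 zero_le_one ((t * m + q + 1 - m) / K)

theorem dist_cellSample_le (q : Fin m) {K : ℕ} (hK : 0 < K) (x : I) {t : ℕ}
    (ht : t = cellIndex m K q x ∨ t = cellIndex m K q x + 1) :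
    dist x (cellSample m K q t) ≤ m / K := by
  have hK' : (0 : ℝ) < K := by exact_mod_cast hK
  obtain ⟨h₁, h₂⟩ := cellIndex_spec q K x.2.1
  have hmK : |K * (x : ℝ) - (t * m + q + 1 - m)| ≤ m := by
    rcases ht with rfl | rfl <;> (push_cast; rw [abs_le]; constructor <;> linarith)
  rw [Subtype.dist_eq, Real.dist_eq, cellSample,
    ← congrArg Subtype.val (Set.projIcc_val zero_le_one x)]
  refine (Set.abs_projIcc_sub_projIcc zero_le_one).trans ?_
  rw [show (x : ℝ) - (t * m + q + 1 - m) / K = (K * x - (t * m + q + 1 - m)) / K by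
    field_simp, abs_div, abs_of_pos hK']
  gcongr

noncomputable def stair (m K : ℕ) (q : Fin m) (c : ℕ → ℝ) (x : ℝ) : ℝ :=
  c 0 + ∑ t ∈ range (K + 1), ramp (K * x - (t * m + q)) * (c (t + 1) - c t)

@[fun_prop]
theorem continuous_stair (m K : ℕ) (q : Fin m) (c : ℕ → ℝ) : Continuous (stair m K q c) := by
  unfold stair
  fun_prop

theorem stair_apply (q : Fin m) (K : ℕ) (c : ℕ → ℝ) (x : I) :
    stair m K q c x = c (cellIndex m K q x) +
      ramp (K * x - (cellIndex m K q x * m + q)) *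
        (c (cellIndex m K q x + 1) - c (cellIndex m K q x)) := by
  obtain ⟨h₁, h₂⟩ := cellIndex_spec q K x.2.1
  have hm : (1 : ℝ) ≤ m := by exact_mod_cast q.pos
  refine sum_range_ramp_eq (fun t => t * m + q) c (Nat.lt_succ_of_le (cellIndex_le q K x.2.2))
    (fun t ht => ?_) fun t ht => ?_
  · have : ((t + 1 : ℕ) : ℝ) * m ≤ cellIndex m K q x * m :=
      mul_le_mul_of_nonneg_right (by exact_mod_cast ht) (by positivity)
    push_cast at this
    linarith
  · have : ((cellIndex m K q x + 1 : ℕ) : ℝ) * m ≤ t * m :=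
      mul_le_mul_of_nonneg_right (by exact_mod_cast ht) (by positivity)
    push_cast at this
    linarith

theorem stair_apply_of_floor_mod_ne (q : Fin m) (K : ℕ) (c : ℕ → ℝ) {x : I}
    (hq : ⌊K * (x : ℝ)⌋₊ % m ≠ q) : stair m K q c x = c (cellIndex m K q x) := by
  rw [stair_apply, ramp_of_nonpos (by linarith [mul_le_of_floor_mod_ne q K hq]), zero_mul,
    add_zero]

theorem abs_stair_sub_le (q : Fin m) (K : ℕ) (c : ℕ → ℝ) (x : I) {z η : ℝ}
    (hc : ∀ t, t = cellIndex m K q x ∨ t = cellIndex m K q x + 1 → |c t - z| ≤ η) :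
    |stair m K q c x - z| ≤ η := by
  have := (convex_closedBall z η).add_smul_sub_mem
    (by simpa [Real.dist_eq] using hc _ (Or.inl rfl))
    (by simpa [Real.dist_eq] using hc _ (Or.inr rfl))
    (ramp_mem_Icc (K * x - (cellIndex m K q x * m + q)))
  rw [Metric.mem_closedBall, smul_eq_mul, Real.dist_eq] at this
  rwa [stair_apply]

end Cells

section InnerFunctions

variable {n m : ℕ}

def innerSum (Ψ : C(I, Fin n → Fin m → ℝ)) (q : Fin m) : C(Fin n → I, ℝ) where
  toFun y := ∑ p, Ψ (y p) p q

theorem innerSum_apply (Ψ : C(I, Fin n → Fin m → ℝ)) (q : Fin m) (y : Fin n → I) :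
    innerSum Ψ q y = ∑ p, Ψ (y p) p q := rfl

def CellSeparated (K : ℕ) (v : ℝ) (Ψ : C(I, Fin n → Fin m → ℝ)) : Prop :=
  ∃ c : Fin n → Fin m → ℕ → ℝ,
    (∀ (x : I) (p : Fin n) (q : Fin m),
      ⌊K * (x : ℝ)⌋₊ % m ≠ q → Ψ x p q = c p q (cellIndex m K q x)) ∧
    ∀ (q : Fin m) (ι ι' : Fin n → Fin (K + 1)),
      ι ≠ ι' → v ≤ |∑ p, c p q (ι p) - ∑ p, c p q (ι' p)|

theorem exists_cellSeparated_near [NeZero m] (Ψ : C(I, Fin n → Fin m → ℝ)) {η d : ℝ}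
    (hη : 0 < η) (hd : 0 < d) :
    ∃ Ψ' : C(I, Fin n → Fin m → ℝ), dist Ψ' Ψ ≤ η ∧
      ∃ (K : ℕ) (v : ℝ), 0 < v ∧ (m : ℝ) < K * d ∧ CellSeparated K v Ψ' := by
  obtain ⟨d', hd', hΨd'⟩ := Metric.uniformContinuous_iff.1
    (CompactSpace.uniformContinuous_of_continuous Ψ.continuous) (η / 2) (half_pos hη)
  have hm : (0 : ℝ) < m := by exact_mod_cast NeZero.pos m
  obtain ⟨K, hK⟩ := exists_nat_gt (m / min d d')
  have hK₀ : 0 < K := by exact_mod_cast (div_pos hm (lt_min hd hd')).trans hK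
  have hmK : (m : ℝ) / K < min d d' := by
    rwa [div_lt_iff₀ (by exact_mod_cast hK₀), mul_comm, ← div_lt_iff₀ (lt_min hd hd')]
  set v := η / 2 / ((K + 1 : ℕ) : ℝ) ^ n with hv
  have hv₀ : 0 < v := by positivity
  have hvK : v * ((K + 1 : ℕ) : ℝ) ^ n = η / 2 := by rw [hv]; field_simp
  set c : Fin n → Fin m → ℕ → ℝ := fun p q =>
    digitLevel v (K + 1) (fun p t => Ψ (cellSample m K q t) p q) p
  have hc_near (x : I) (p : Fin n) (q : Fin m) (t : ℕ)
      (ht : t = cellIndex m K q x ∨ t = cellIndex m K q x + 1) : |c p q t - Ψ x p q| ≤ η := by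
    have hσ : dist (cellSample m K q t) x < d' := by
      rw [dist_comm]
      exact (dist_cellSample_le q hK₀ x ht).trans_lt (hmK.trans_le (min_le_right _ _))
    have htK : t ≤ K + 1 := by rcases ht with rfl | rfl <;> linarith [cellIndex_le q K x.2.2]
    calc |c p q t - Ψ x p q|
        ≤ |c p q t - Ψ (cellSample m K q t) p q| + |Ψ (cellSample m K q t) p q - Ψ x p q| :=
          abs_sub_le _ _ _
      _ ≤ η / 2 + η / 2 := add_le_add (hvK ▸ abs_digitLevel_sub_le hv₀ K.succ_pos _ p htK)
          ((abs_sub_apply_le_dist _ _ p q).trans (hΨd' hσ).le)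
      _ = η := add_halves η
  refine ⟨⟨fun x p q => stair m K q (c p q) x, by fun_prop⟩,
    (ContinuousMap.dist_le hη.le).2 fun x => (dist_pi_le_iff hη.le).2 fun p =>
      (dist_pi_le_iff hη.le).2 fun q => ?_, K, v, hv₀, ?_, c,
    fun x p q hq => stair_apply_of_floor_mod_ne q K _ hq,
    fun q ι ι' hne => le_abs_sum_digitLevel_sub hv₀.le _ hne⟩
  · rw [Real.dist_eq]
    exact abs_stair_sub_le q K _ x (hc_near x p q)
  · have := hmK.trans_le (min_le_left _ _)
    rwa [div_lt_iff₀ (by exact_mod_cast hK₀), mul_comm] at this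

theorem CellSeparated.separatesAt [NeZero m] {K : ℕ} {v d : ℝ} {Ψ Φ : C(I, Fin n → Fin m → ℝ)}
    (hΨ : CellSeparated K v Ψ) (hKd : (m : ℝ) < K * d) (hΦ : dist Φ Ψ < v / (4 * (n + 1))) :
    SeparatesAt (fun q => ⇑(innerSum Φ q)) (m - n) d := by
  classical
  obtain ⟨c, hc_eq, hc_sep⟩ := hΨ
  have hm : (0 : ℝ) < m := by exact_mod_cast NeZero.pos m
  have hK : 0 < K := by
    by_contra! h
    simp [Nat.le_zero.1 h] at hKd
    linarith
  have hd : 0 < d := pos_of_mul_pos_right (hm.trans hKd) K.cast_nonneg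
  have hv : 0 < v := (div_pos_iff_of_pos_right (by positivity)).1 (dist_nonneg.trans_lt hΦ)
  refine ⟨Fin n → Fin (K + 1), inferInstance, fun q ι => ∑ p, c p q (ι p),
    fun q ι p => cellSample m K q (ι p), v, hv, fun q ι ι' hne => hc_sep q ι ι' hne, fun x => ?_⟩
  -- the only channel that may have a gap at `x p`
  set bad : Fin n → Fin m := fun p => ⟨⌊K * (x p : ℝ)⌋₊ % m, Nat.mod_lt _ (NeZero.pos m)⟩
  refine ⟨(univ.image bad)ᶜ, ?_, fun q hq => ⟨fun p =>
    ⟨cellIndex m K q (x p), Nat.lt_succ_of_le (cellIndex_le q K (x p).2.2)⟩, ?_, ?_⟩⟩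
  · simpa using sub_le_card_compl_image bad
  · refine (dist_pi_lt_iff hd).2 fun p => (dist_cellSample_le q hK (x p) (Or.inl rfl)).trans_lt ?_
    rwa [div_lt_iff₀ (by exact_mod_cast hK), mul_comm]
  · have hgood (p : Fin n) : ⌊K * (x p : ℝ)⌋₊ % m ≠ q := fun h =>
      mem_compl.1 hq (mem_image.2 ⟨p, mem_univ p, Fin.ext h⟩)
    calc |innerSum Φ q x - ∑ p, c p q (cellIndex m K q (x p))|
        = |∑ p, (Φ (x p) p q - Ψ (x p) p q)| := by
          rw [innerSum_apply, sum_sub_distrib]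
          simp only [hc_eq _ _ _ (hgood _)]
      _ ≤ ∑ _p : Fin n, dist Φ Ψ := (abs_sum_le_sum_abs _ _).trans <| sum_le_sum fun p _ =>
          (abs_sub_apply_le_dist _ _ p q).trans (ContinuousMap.dist_apply_le_dist (x p))
      _ = n * dist Φ Ψ := by simp
      _ ≤ (n + 1) * (v / (4 * (n + 1))) := by gcongr; linarith
      _ = v / 4 := by field_simp

theorem exists_separatesAt_innerSum [NeZero m] :
    ∃ Ψ : C(I, Fin n → Fin m → ℝ), ∀ d > 0, SeparatesAt (fun q => ⇑(innerSum Ψ q)) (m - n) d := by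
  set U : ℕ → Set C(I, Fin n → Fin m → ℝ) := fun j =>
    interior {Ψ | SeparatesAt (fun q => ⇑(innerSum Ψ q)) (m - n) (1 / (j + 1))}
  have hU (j : ℕ) : Dense (U j) := by
    refine Metric.dense_iff.2 fun Ψ r hr => ?_
    obtain ⟨Ψ', hΨ', K, v, hv, hKd, hsep⟩ := exists_cellSeparated_near Ψ (half_pos hr)
      (d := 1 / (j + 1)) (by positivity)
    refine ⟨Ψ', by rw [Metric.mem_ball]; linarith, mem_interior_iff_mem_nhds.2 ?_⟩
    exact Filter.mem_of_superset (Metric.ball_mem_nhds Ψ' (by positivity))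
      fun Φ hΦ => hsep.separatesAt hKd hΦ
  obtain ⟨Ψ, hΨ⟩ := (dense_iInter_of_isOpen_nat (fun _ => isOpen_interior) hU).nonempty
  refine ⟨Ψ, fun d hd => ?_⟩
  obtain ⟨j, hj⟩ := exists_nat_one_div_lt hd
  have hΨj := interior_subset (Set.mem_iInter.1 hΨ j)
  exact SeparatesAt.mono hΨj hj.le

end InnerFunctions

/-- Kolmogorov–Arnold representation theorem: every continuous function on the unit
cube is an exact finite superposition of continuous univariate functions and addition. -/
theorem kolmogorov_arnold_representation (n : ℕ) (f : (Fin n → ℝ) → ℝ)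
    (hf : ContinuousOn f {x : Fin n → ℝ | ∀ i, x i ∈ Set.Icc (0:ℝ) 1}) :
    ∃ (φ : ℕ → ℝ → ℝ) (ψ : Fin n → ℕ → ℝ → ℝ),
      (∀ q, Continuous (φ q)) ∧
      (∀ p q, ContinuousOn (ψ p q) (Set.Icc (0:ℝ) 1)) ∧
      ∀ x : Fin n → ℝ, (∀ i, x i ∈ Set.Icc (0:ℝ) 1) →
        f x = ∑ q ∈ Finset.range (2 * n + 1), φ q (∑ p : Fin n, ψ p q (x p)) := by
  obtain ⟨Ψ, hΨ⟩ := exists_separatesAt_innerSum (n := n) (m := 2 * n + 1)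
  have hsurj := superposition_surjective (innerSum Ψ) (k := n + 1) (by simp; omega)
    (by simpa [show 2 * n + 1 - n = n + 1 by omega] using hΨ)
  obtain ⟨Φ, hΦ⟩ := hsurj (.mkOfCompact ⟨fun y => f (fun p => y p),
    hf.comp_continuous (by fun_prop) fun y p => (y p).2⟩)
  refine ⟨fun q => if h : q < 2 * n + 1 then Φ ⟨q, h⟩ else 0,
    fun p q => if h : q < 2 * n + 1 then Set.IccExtend zero_le_one (fun t => Ψ t p ⟨q, h⟩) else 0,
    fun q => ?_, fun p q => ?_, fun x hx => ?_⟩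
  · dsimp only
    split_ifs
    exacts [(Φ _).continuous, continuous_const]
  · dsimp only
    split_ifs
    exacts [(continuous_IccExtend_iff.2 (by fun_prop)).continuousOn, continuousOn_const]
  · have := congrArg (· fun p => ⟨x p, hx p⟩) hΦ
    simp only [superposition_apply, innerSum_apply, mkOfCompact_apply, ContinuousMap.coe_mk] at this
    refine this.symm.trans ?_
    rw [sum_range]
    refine sum_congr rfl fun q _ => ?_
    simp only [Fin.is_lt, dite_true, Fin.eta, Set.IccExtend_of_mem _ _ (hx _)]
end
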